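/- Let S_1 be the eventually periodic sequence in Z/4Z with initial block 01220232 followed by the infinitely repeated period 212113220030232311200232. Then for every integer k ≥ 1 and every element j of Z/4Z, the multiplicity of j among the entries of the Steinhaus triangle ∇S_1[8k] exceeds the multiplicity of j among the entries of ∇S_1[8(k−1)] by exactly 16k − 7. -/

import Mathlib

/-- Next row of a Steinhaus triangle: pairwise sums of adjacent entries. -/
def nextRow {m : ℕ} (l : List (ZMod m)) : List (ZMod m) :=
  List.zipWith (· + ·) l l.tail

/-- The rows of the Steinhaus triangle generated by the first row `l`. -/
def triangleRows {m : ℕ} (l : List (ZMod m)) : List (List (ZMod m)) :=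
  (List.range l.length).map (fun i => nextRow^[i] l)

/-- All entries of the Steinhaus triangle generated by `l`. -/
def triangleEntries {m : ℕ} (l : List (ZMod m)) : List (ZMod m) :=
  (triangleRows l).flatten

/-- The Steinhaus triangle of `l` is balanced: all elements of `ZMod m`
occur with the same multiplicity among its entries. -/
def IsBalanced {m : ℕ} (l : List (ZMod m)) : Prop :=
  ∀ a b : ZMod m, (triangleEntries l).count a = (triangleEntries l).count b

/-- The eventually periodic sequence with initial block `I` and period `P`. -/
def evPeriodic {m : ℕ} (I P : List (ZMod m)) : ℕ → ZMod m :=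
  fun i => if i < I.length then I.getD i 0 else P.getD ((i - I.length) % P.length) 0

/-- The initial segment of length `l` of the sequence `S`. -/
def seg {m : ℕ} (S : ℕ → ZMod m) (l : ℕ) : List (ZMod m) :=
  (List.range l).map S

def S1 : ℕ → ZMod 4 :=
  evPeriodic ([0,1,2,2,0,2,3,2] : List (ZMod 4)) ([2,1,2,1,1,3,2,2,0,0,3,0,2,3,2,3,1,1,2,0,0,2,3,2] : List (ZMod 4))

/-!
Row `i` of `∇S[n]` is the initial segment of length `n - i` of the `i`-th iterate of the
derived sequence `p ↦ S p + S (p + 1)`. Since `S₁` is `24`-periodic from index `8`, so is every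
derived sequence, and a finite check shows that the derived sequences repeat with period `24`
from the `4`-th one on. The entries of `∇S₁[n + 24]` outside `∇S₁[n]` are a window of `24`
consecutive entries in each of the first `n` rows plus the `24` new rows; shifting everything
down by `24` rows shows that, when `n` grows by `24`, this strip gains exactly the windows of
rows `4, …, 27`, a full period, which contain each element `144` times. Writing `T n` for the
multiplicity of `j` in `∇S₁[n]`, this gives `T (n + 48) + T n = 2 T (n + 24) + 144` for `n ≥ 12`,
and with the values `T (8k) = k (8k + 1)` for `k < 8` that formula follows for all `k`.
-/

open Finset

namespace Steinhaus

def PeriodicFrom {α : Type*} (f : ℕ → α) (N P : ℕ) : Prop :=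
  ∀ p, N ≤ p → f (p + P) = f p

theorem PeriodicFrom.eq_of_forall_lt {α : Type*} {f g : ℕ → α} {N P : ℕ} (hf : PeriodicFrom f N P)
    (hg : PeriodicFrom g N P) (hP : 0 < P) (hfg : ∀ p < N + P, f p = g p) : f = g := by
  funext p
  induction p using Nat.strong_induction_on with
  | _ p ih =>
    by_cases hp : p < N + P
    · exact hfg p hp
    · obtain ⟨q, rfl⟩ : ∃ q, p = q + P := ⟨p - P, by omega⟩
      rw [hf q (by omega), hg q (by omega), ih q (by omega)]

theorem periodicFrom_iterate {α : Type*} {g : α → α} {x : α} {R P : ℕ}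
    (h : g^[R + P] x = g^[R] x) : PeriodicFrom (fun i => g^[i] x) R P := by
  intro i hi
  obtain ⟨d, rfl⟩ := Nat.exists_eq_add_of_le hi
  simp only
  rw [show R + d + P = d + (R + P) by omega, Function.iterate_add_apply, h,
    ← Function.iterate_add_apply, add_comm]

variable {m : ℕ}

def derive (f : ℕ → ZMod m) : ℕ → ZMod m := fun p => f p + f (p + 1)

theorem PeriodicFrom.iterate_derive {f : ℕ → ZMod m} {N P : ℕ} (hf : PeriodicFrom f N P)
    (i : ℕ) : PeriodicFrom (derive^[i] f) N P := by
  induction i with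
  | zero => exact hf
  | succ i ih =>
    intro p hp
    simp only [Function.iterate_succ_apply', derive, add_right_comm p P 1, ih p hp,
      ih (p + 1) (by omega)]

theorem length_seg (f : ℕ → ZMod m) (n : ℕ) : (seg f n).length = n := by
  simp [seg]

theorem getElem_seg (f : ℕ → ZMod m) (n p : ℕ) (h : p < (seg f n).length) :
    (seg f n)[p] = f p := by
  simp [seg]

theorem seg_eq_seg_iff {f g : ℕ → ZMod m} {n : ℕ} : seg f n = seg g n ↔ ∀ p < n, f p = g p := by
  simp [seg]

theorem seg_add (f : ℕ → ZMod m) (a b : ℕ) :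
    seg f (a + b) = seg f a ++ seg (fun t => f (a + t)) b := by
  simp only [seg, List.range_add, List.map_append, List.map_map]
  rfl

theorem seg_shift_eq_drop (f : ℕ → ZMod m) (a b : ℕ) :
    seg (fun t => f (a + t)) b = (seg f (a + b)).drop a := by
  rw [seg_add, List.drop_left' (length_seg f a)]

theorem nextRow_seg (f : ℕ → ZMod m) (n : ℕ) : nextRow (seg f n) = seg (derive f) (n - 1) := by
  apply List.ext_getElem
  · simp [nextRow, seg]
  · intro p h₁ h₂
    simp only [nextRow, List.getElem_zipWith, List.getElem_tail, getElem_seg]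
    rfl

theorem iterate_nextRow_seg (f : ℕ → ZMod m) (i n : ℕ) :
    nextRow^[i] (seg f n) = seg (derive^[i] f) (n - i) := by
  induction i generalizing f n with
  | zero => rfl
  | succ i ih => rw [Function.iterate_succ_apply, nextRow_seg, ih, Nat.sub_sub, add_comm 1 i]; rfl

theorem seg_iterate_derive (f : ℕ → ZMod m) (i n : ℕ) :
    seg (derive^[i] f) n = nextRow^[i] (seg f (n + i)) := by
  rw [iterate_nextRow_seg, Nat.add_sub_cancel]

theorem count_triangleEntries_seg (f : ℕ → ZMod m) (n : ℕ) (j : ZMod m) :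
    (triangleEntries (seg f n)).count j = ∑ i ∈ range n, (seg (derive^[i] f) (n - i)).count j := by
  rw [triangleEntries, triangleRows, List.count_flatten, List.map_map, length_seg,
    ← List.sum_toFinset _ List.nodup_range, List.toFinset_range]
  exact sum_congr rfl fun i _ => by rw [Function.comp_apply, iterate_nextRow_seg]

theorem seg_succ_perm {f : ℕ → ZMod m} {P : ℕ} (hf : f P = f 0) :
    (seg (fun t => f (t + 1)) P).Perm (seg f P) := by
  have h : f 0 :: seg (fun t => f (t + 1)) P = seg f P ++ [f 0] := calc
    _ = seg f (P + 1) := by simp [seg, List.range_succ_eq_map]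
    _ = seg f P ++ [f 0] := by simp [seg, List.range_succ, hf]
  exact (List.perm_cons (f 0)).mp (h ▸ List.perm_append_singleton _ _)

theorem count_seg_shift {f : ℕ → ZMod m} {N P : ℕ} (hf : PeriodicFrom f N P) {a : ℕ} (ha : N ≤ a)
    (j : ZMod m) : (seg (fun t => f (a + t)) P).count j = (seg (fun t => f (N + t)) P).count j := by
  induction a, ha using Nat.le_induction with
  | base => rfl
  | succ a ha ih =>
    rw [← ih, ← (seg_succ_perm (f := fun t => f (a + t)) (by simpa using hf a ha)).count_eq j]
    simp only [add_assoc, add_comm 1]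

section Strip

variable (f : ℕ → ZMod m) (j : ZMod m) (P : ℕ)

/-- The multiplicity of `j` among the entries of `∇S[n + P]` that lie outside `∇S[n]`. -/
def stripCount (n : ℕ) : ℕ :=
  ∑ i ∈ range n, (seg (fun t => derive^[i] f (n - i + t)) P).count j +
    ∑ i ∈ range P, (seg (derive^[n + i] f) (P - i)).count j

theorem count_triangleEntries_seg_add (n : ℕ) :
    (triangleEntries (seg f (n + P))).count j
      = (triangleEntries (seg f n)).count j + stripCount f j P n := by
  have hrow : ∀ i ∈ range n, (seg (derive^[i] f) (n + P - i)).count j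
      = (seg (derive^[i] f) (n - i)).count j
        + (seg (fun t => derive^[i] f (n - i + t)) P).count j := fun i hi => by
    rw [show n + P - i = n - i + P by have := mem_range.mp hi; omega, seg_add, List.count_append]
  rw [count_triangleEntries_seg, count_triangleEntries_seg, stripCount, sum_range_add,
    sum_congr rfl hrow, sum_add_distrib, add_assoc]
  simp only [Nat.add_sub_add_left]

variable {f P}

theorem stripCount_add_period {N R : ℕ} (hcol : PeriodicFrom f N P)
    (hrow : PeriodicFrom (fun i => derive^[i] f) R P) {n : ℕ} (hn : R + N ≤ n) :
    stripCount f j P (n + P)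
      = stripCount f j P n + ∑ i ∈ range P, (seg (fun t => derive^[R + i] f (N + t)) P).count j := by
  set W := fun i a => (seg (fun t => derive^[i] f (a + t)) P).count j
  have hrow' : ∀ i, R ≤ i → derive^[i + P] f = derive^[i] f := hrow
  have hwindow : ∀ i a, N ≤ a → W i a = W i N :=
    fun i a ha => count_seg_shift (hcol.iterate_derive i) ha j
  have hbottom : ∑ i ∈ range P, (seg (derive^[n + P + i] f) (P - i)).count j
      = ∑ i ∈ range P, (seg (derive^[n + i] f) (P - i)).count j :=
    sum_congr rfl fun i _ => by rw [add_right_comm n P i, hrow' (n + i) (by omega)]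
  have hwindows_add : ∑ i ∈ range (n + P), W i (n + P - i)
      = ∑ i ∈ range (R + P), W i N + ∑ i ∈ range (n - R), W (R + i) (n - (R + i)) := by
    rw [show n + P = R + P + (n - R) by omega, sum_range_add]
    congr 1
    · exact sum_congr rfl fun i hi => hwindow i _ (by have := mem_range.mp hi; omega)
    · refine sum_congr rfl fun i _ => ?_
      simp only [W, add_right_comm R P i, hrow' (R + i) (by omega)]
      rw [show R + P + (n - R) - (R + i + P) = n - (R + i) by omega]
  have hwindows : ∑ i ∈ range n, W i (n - i)
      = ∑ i ∈ range R, W i N + ∑ i ∈ range (n - R), W (R + i) (n - (R + i)) := by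
    rw [show n = R + (n - R) by omega, sum_range_add, Nat.add_sub_cancel_left]
    congr 1
    exact sum_congr rfl fun i hi => hwindow i _ (by have := mem_range.mp hi; omega)
  simp only [stripCount]
  rw [hwindows_add, hwindows, hbottom, sum_range_add]
  ring

theorem count_triangleEntries_seg_add_add {N R : ℕ} (hcol : PeriodicFrom f N P)
    (hrow : PeriodicFrom (fun i => derive^[i] f) R P) {n : ℕ} (hn : R + N ≤ n) :
    (triangleEntries (seg f (n + P + P))).count j + (triangleEntries (seg f n)).count j
      = 2 * (triangleEntries (seg f (n + P))).count j
        + ∑ i ∈ range P, (seg (fun t => derive^[R + i] f (N + t)) P).count j := by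
  rw [count_triangleEntries_seg_add f j P (n + P), stripCount_add_period j hcol hrow hn,
    count_triangleEntries_seg_add f j P n]
  ring

end Strip

theorem S1_periodicFrom : PeriodicFrom S1 8 24 := by
  intro p hp
  simp only [S1, evPeriodic, List.length_cons, List.length_nil]
  rw [if_neg (by omega), if_neg (by omega), show p + 24 - 8 = p - 8 + 24 by omega,
    Nat.add_mod_right]

set_option maxRecDepth 40000 in
theorem iterate_derive_S1_periodicFrom : PeriodicFrom (fun i => derive^[i] S1) 4 24 := by
  have h : seg (derive^[4 + 24] S1) 32 = seg (derive^[4] S1) 32 := by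
    rw [seg_iterate_derive, seg_iterate_derive]
    decide
  exact periodicFrom_iterate <| (S1_periodicFrom.iterate_derive _).eq_of_forall_lt
    (S1_periodicFrom.iterate_derive _) (by norm_num) (seg_eq_seg_iff.mp h)

set_option maxRecDepth 40000 in
theorem sum_count_window_S1 (j : ZMod 4) :
    ∑ i ∈ range 24, (seg (fun t => derive^[4 + i] S1 (8 + t)) 24).count j = 144 := by
  simp only [seg_shift_eq_drop, seg_iterate_derive]
  revert j
  decide

set_option maxRecDepth 40000 in
theorem count_triangleEntries_seg_S1 (k : ℕ) (j : ZMod 4) :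
    (triangleEntries (seg S1 (8 * k))).count j = k * (8 * k + 1) := by
  induction k using Nat.strong_induction_on with
  | _ k ih =>
    obtain hk | hk := lt_or_ge k 8
    · revert j
      interval_cases k <;> decide
    · obtain ⟨k, rfl⟩ : ∃ l, k = l + 6 := ⟨k - 6, by omega⟩
      have h := count_triangleEntries_seg_add_add j S1_periodicFrom
        iterate_derive_S1_periodicFrom (n := 8 * k) (by omega)
      rw [sum_count_window_S1, show 8 * k + 24 + 24 = 8 * (k + 6) by ring,
        show 8 * k + 24 = 8 * (k + 3) by ring, ih k (by omega), ih (k + 3) (by omega)] at h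
      linarith

end Steinhaus

theorem stmt14_general (k : ℕ) (j : ZMod 4) :
    (triangleEntries (seg S1 (8 * k))).count j
      = (triangleEntries (seg S1 (8 * (k - 1)))).count j + (16 * k - 7) := by
  rw [Steinhaus.count_triangleEntries_seg_S1, Steinhaus.count_triangleEntries_seg_S1]
  rcases k with _ | k
  · rfl
  · simp only [Nat.add_sub_cancel]
    ring_nf
    omega

theorem stmt14 (k : ℕ) (hk : 1 ≤ k) (j : ZMod 4) :
    (triangleEntries (seg S1 (8 * k))).count j
      = (triangleEntries (seg S1 (8 * (k - 1)))).count j + (16 * k - 7) :=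
  stmt14_general k j
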